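/- arXiv:2401.08605 — 2 statements merged into one kernel-verified Lean document; each statement's English description precedes it below -/
import Mathlib

section
/- Let p_1, …, p_k be distinct primes, N = p_1 + ⋯ + p_k, and P = p_1 ⋯ p_k. Then there exists a linear thresholding system (J, θ) on N genes (with all thresholds positive) having a cycle of length P; that is, there exists x ∈ {0,1}^N which is a periodic point of f_{(J,θ)} with minimal period exactly P. -/
/-!
With `J` the permutation matrix of `σ` and all thresholds `1/2`, the system acts on states by
`x ↦ x ∘ σ`. Let `σ` rotate cyclically each of `k` disjoint blocks of sizes `p_1, …, p_k`, and let
`x` switch on exactly the first gene of every block. Then `x ∘ σⁿ = x` iff each `p_i` divides `n`,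
iff `P ∣ n` since the `p_i` are distinct primes; so `x` has minimal period `P`.
-/

/-- The map of a linear thresholding system `(J, θ)` on `{0,1}^N`:
`f(x)_i = 1` iff `(Jx)_i > θ_i`, where `x ∈ {0,1}^N` is viewed as a real vector. -/
noncomputable def ltsMap {N : ℕ} (J : Matrix (Fin N) (Fin N) ℝ) (θ : Fin N → ℝ)
    (x : Fin N → Bool) : Fin N → Bool :=
  fun i => if θ i < J.mulVec (fun j => if x j then (1 : ℝ) else 0) i then true else false

open Function Equiv

theorem ltsMap_permMatrix {N : ℕ} (σ : Perm (Fin N)) {θ : Fin N → ℝ} (hθ₀ : ∀ i, 0 ≤ θ i)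
    (hθ₁ : ∀ i, θ i < 1) : ltsMap (σ.permMatrix ℝ) θ = fun x => x ∘ σ := by
  funext x i
  cases h : x (σ i) <;> simp [ltsMap, Matrix.permMatrix_mulVec, h, hθ₁ i, (hθ₀ i).not_gt]

theorem iterate_precomp_apply {α β : Type*} (f : α → α) (x : α → β) (n : ℕ) :
    (fun y : α → β => y ∘ f)^[n] x = x ∘ f^[n] := by
  induction n with
  | zero => rfl
  | succ n ih => rw [iterate_succ_apply', ih, iterate_succ, comp_assoc]

theorem isPeriodicPt_precomp_iff {α β : Type*} (σ : Perm α) (x : α → β) (n : ℕ) :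
    IsPeriodicPt (fun y : α → β => y ∘ σ) n x ↔ x ∘ ⇑(σ ^ n) = x := by
  rw [IsPeriodicPt, IsFixedPt, iterate_precomp_apply, Perm.iterate_eq_pow]

theorem isPeriodicPt_precomp_permCongr_iff {α β γ : Type*} (e : α ≃ β) (τ : Perm α)
    (y : α → γ) (n : ℕ) :
    IsPeriodicPt (fun x : β → γ => x ∘ e.permCongr τ) n (y ∘ e.symm) ↔
      IsPeriodicPt (fun x : α → γ => x ∘ τ) n y := by
  rw [isPeriodicPt_precomp_iff, isPeriodicPt_precomp_iff, ← e.permCongrHom_coe, ← map_pow,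
    e.permCongrHom_coe]
  have hconj : (y ∘ e.symm) ∘ ⇑(e.permCongr (τ ^ n)) = (y ∘ ⇑(τ ^ n)) ∘ e.symm := by
    funext b; simp
  rw [hconj, e.symm.surjective.injective_comp_right.eq_iff]

def graphIndicator {ι : Type*} {β : ι → Type*} [∀ i, DecidableEq (β i)] (s : ∀ i, β i) :
    (Σ i, β i) → Bool :=
  fun a => decide (a.2 = s a.1)

theorem graphIndicator_comp_sigmaCongrRight_eq_self_iff {ι : Type*} {β : ι → Type*}
    [∀ i, DecidableEq (β i)] (s : ∀ i, β i) (F : ∀ i, Perm (β i)) :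
    graphIndicator s ∘ ⇑(Perm.sigmaCongrRight F) = graphIndicator s ↔ ∀ i, F i (s i) = s i := by
  refine ⟨fun h i => of_decide_eq_true ((congrFun h ⟨i, s i⟩).trans (decide_eq_true rfl)),
    fun h => funext fun ⟨i, j⟩ => ?_⟩
  exact decide_eq_decide.2 ((F i).injective.eq_iff' (h i))

theorem val_finRotate_pow_apply {n : ℕ} (m : ℕ) (i : Fin n) :
    ((finRotate n ^ m) i : ℕ) = (i + m) % n := by
  induction m with
  | zero => simp [Nat.mod_eq_of_lt i.isLt]
  | succ m ih =>
    have := i.neZero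
    rw [pow_succ', Perm.mul_apply, finRotate_apply, Fin.val_add, ih, Fin.val_one']
    simp [Nat.add_mod, ← add_assoc]

theorem finRotate_pow_apply_zero_eq_zero_iff {n : ℕ} [NeZero n] (m : ℕ) :
    (finRotate n ^ m) 0 = 0 ↔ n ∣ m := by
  rw [Fin.ext_iff, val_finRotate_pow_apply, Fin.val_zero, zero_add, Nat.dvd_iff_mod_eq_zero]

theorem prod_dvd_iff_forall_dvd {ι : Type*} [Fintype ι] {p : ι → ℕ} (hp : ∀ i, (p i).Prime)
    (hinj : Injective p) (n : ℕ) : ∏ i, p i ∣ n ↔ ∀ i, p i ∣ n := by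
  classical
  refine ⟨fun h i => (Finset.dvd_prod_of_mem p (Finset.mem_univ i)).trans h, fun h => ?_⟩
  calc ∏ i, p i = ∏ q ∈ Finset.univ.image p, q :=
        (Finset.prod_image (f := id) fun _ _ _ _ h => hinj h).symm
    _ ∣ n := Finset.prod_primes_dvd n (by simpa using fun i => (hp i).prime) (by simpa using h)

def blockRotation {k : ℕ} (p : Fin k → ℕ) : Perm (Fin (∑ i, p i)) :=
  finSigmaFinEquiv.permCongr (Perm.sigmaCongrRight fun i => finRotate (p i))

def blockStart {k : ℕ} (p : Fin k → ℕ) [∀ i, NeZero (p i)] : Fin (∑ i, p i) → Bool :=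
  graphIndicator (fun i => (0 : Fin (p i))) ∘ finSigmaFinEquiv.symm

theorem isPeriodicPt_blockStart_iff {k : ℕ} (p : Fin k → ℕ) [∀ i, NeZero (p i)] (n : ℕ) :
    IsPeriodicPt (fun x => x ∘ blockRotation p) n (blockStart p) ↔ ∀ i, p i ∣ n := by
  rw [blockStart, blockRotation, isPeriodicPt_precomp_permCongr_iff, isPeriodicPt_precomp_iff,
    ← Perm.sigmaCongrRightHom_apply, ← map_pow, Perm.sigmaCongrRightHom_apply,
    graphIndicator_comp_sigmaCongrRight_eq_self_iff]
  simp only [Pi.pow_apply, finRotate_pow_apply_zero_eq_zero_iff]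

/-- Given distinct primes `p_1, …, p_k` with `N = ∑ p_i` and `P = ∏ p_i`, there is a linear
thresholding system on `N` genes (with positive thresholds) having a cycle of length `P`. -/
theorem exists_cycle_of_length_prod {k : ℕ} (p : Fin k → ℕ) (hp : ∀ i, (p i).Prime)
    (hinj : Function.Injective p) :
    ∃ (J : Matrix (Fin (∑ i, p i)) (Fin (∑ i, p i)) ℝ) (θ : Fin (∑ i, p i) → ℝ),
      (∀ i, 0 < θ i) ∧
      ∃ x : Fin (∑ i, p i) → Bool,
        Function.IsPeriodicPt (ltsMap J θ) (∏ i, p i) x ∧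
        Function.minimalPeriod (ltsMap J θ) x = ∏ i, p i := by
  have : ∀ i, NeZero (p i) := fun i => ⟨(hp i).ne_zero⟩
  have hperiod : ∀ n, IsPeriodicPt (ltsMap ((blockRotation p).permMatrix ℝ) fun _ => 1 / 2) n
      (blockStart p) ↔ ∏ i, p i ∣ n := fun n => by
    rw [ltsMap_permMatrix _ (fun _ => by norm_num) (fun _ => by norm_num),
      isPeriodicPt_blockStart_iff, prod_dvd_iff_forall_dvd hp hinj]
  refine ⟨_, _, fun _ => by norm_num, blockStart p, (hperiod _).2 dvd_rfl, ?_⟩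
  exact eq_of_forall_dvd fun n => by rw [← isPeriodicPt_iff_minimalPeriod_dvd, hperiod]
end

section
/- Let p_1, …, p_k be distinct primes, N = p_1 + ⋯ + p_k, and let f : {0,1}^N → {0,1}^N be the product of the cyclic shifts on the blocks of sizes p_1, …, p_k (equivalently, the linear thresholding map whose matrix is block-diagonal with blocks cyclically permuting the basis vectors of ℝ^{p_i} and all thresholds 1/2). Then for every subset S ⊆ {1,…,k}, the number of orbits of f of cardinality exactly ∏_{i∈S} p_i is at least ∏_{i∈S} (2^{p_i} − 2)/p_i. -/
/-!
Let `A` be the set of states whose blocks indexed by `S` are non-constant and whose other blocks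
vanish. A non-constant word of prime length `q` has minimal period `q` under the shift, so by the
Chinese remainder theorem every state in `A` has minimal period, hence orbit size,
`M = ∏_{i∈S} p_i`. Each orbit of size `M` contains at most `M` points of `A`, so there are at
least `|A| / M` of them, and `|A| = ∏_{i∈S} (2^{p_i} - 2)` where each factor is divisible by
`p_i` by Fermat's little theorem.
-/

/-- The product of the cyclic shifts on blocks `{0,1}^{p 1} × ⋯ × {0,1}^{p k}`:
each block is shifted cyclically (indices in `ℤ/(p i)ℤ`). -/
def prodShift {k : ℕ} (p : Fin k → ℕ) (x : (i : Fin k) → ZMod (p i) → Bool) :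
    (i : Fin k) → ZMod (p i) → Bool :=
  fun i j => x i (j - 1)

/-- The orbit of a state under the product of cyclic shifts. -/
def prodOrbit {k : ℕ} (p : Fin k → ℕ) (x : (i : Fin k) → ZMod (p i) → Bool) :
    Set ((i : Fin k) → ZMod (p i) → Bool) :=
  {y | ∃ n : ℕ, (prodShift p)^[n] x = y}

open Function Finset

theorem Nat.Prime.dvd_pow_self_sub {q : ℕ} (hq : q.Prime) (a : ℕ) : q ∣ a ^ q - a := by
  have ha : a ≤ a ^ q := Nat.le_self_pow hq.ne_zero a
  have := Int.prime_dvd_pow_self_sub hq a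
  rwa [← Nat.cast_pow, ← Nat.cast_sub ha, Int.natCast_dvd_natCast] at this

theorem card_univ_sdiff_image_const (α β : Type*) [Fintype α] [DecidableEq α] [Nonempty α]
    [Fintype β] [DecidableEq β] :
    #(univ \ univ.image (const α : β → α → β)) =
      Fintype.card β ^ Fintype.card α - Fintype.card β := by
  rw [card_univ_sdiff, card_image_of_injective _ (const_injective), Fintype.card_fun, card_univ]

theorem ZMod.periodic_natCast_iff_dvd {q : ℕ} [Fact q.Prime] {β : Type*} {y : ZMod q → β}
    (hy : y ∉ Set.range (const (ZMod q))) (n : ℕ) : Periodic y n ↔ q ∣ n := by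
  refine ⟨fun h => ?_, fun h => ?_⟩
  · by_contra hn
    rw [← ZMod.natCast_eq_zero_iff] at hn
    refine hy ⟨y 0, funext fun j => ?_⟩
    -- every `j` is a natural multiple of the unit `n`
    have hj : ((j * (n : ZMod q)⁻¹).val : ZMod q) * n = j := by
      rw [ZMod.natCast_zmod_val, mul_assoc, inv_mul_cancel₀ hn, mul_one]
    have := h.nat_mul (j * (n : ZMod q)⁻¹).val 0
    rwa [zero_add, hj, eq_comm] at this
  · rw [(ZMod.natCast_eq_zero_iff n q).mpr h]
    exact fun j => congrArg y (add_zero j)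

theorem Finset.prod_dvd_iff_forall_dvd_of_prime {ι : Type*} {p : ι → ℕ} (hp : ∀ i, (p i).Prime)
    (hinj : Injective p) (S : Finset ι) (n : ℕ) : (∏ i ∈ S, p i) ∣ n ↔ ∀ i ∈ S, p i ∣ n := by
  classical
  refine ⟨fun h i hi => (dvd_prod_of_mem p hi).trans h, fun h => ?_⟩
  have hprod : ∏ q ∈ S.image p, q = ∏ i ∈ S, p i := prod_image fun i _ j _ hij => hinj hij
  rw [← hprod]
  refine prod_primes_dvd n (fun q hq => ?_) fun q hq => ?_ <;>
    obtain ⟨i, hi, rfl⟩ := mem_image.mp hq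
  exacts [(hp i).prime, h i hi]

theorem ncard_setOf_iterate_eq {α : Type*} {f : α → α} {x : α} (hx : x ∈ periodicPts f) :
    {y | ∃ n, f^[n] x = y}.ncard = minimalPeriod f x := by
  have horbit : {y | ∃ n, f^[n] x = y} = (f^[·] x) '' Set.Iio (minimalPeriod f x) := by
    ext y
    refine ⟨fun ⟨n, hn⟩ => ⟨n % minimalPeriod f x, ?_, ?_⟩, fun ⟨n, _, hn⟩ => ⟨n, hn⟩⟩
    · exact Nat.mod_lt n (minimalPeriod_pos_of_mem_periodicPts hx)
    · exact (iterate_mod_minimalPeriod_eq).trans hn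
  rw [horbit, iterate_injOn_Iio_minimalPeriod.ncard_image, Set.ncard_Iio_nat]

theorem Finset.card_le_mul_card_image_of_mem {α : Type*} [Finite α] (A : Finset α)
    (g : α → Set α) (M : ℕ) (hmem : ∀ x ∈ A, x ∈ g x) (hcard : ∀ x ∈ A, (g x).ncard = M) :
    #A ≤ M * #(A.image g) := by
  classical
  refine card_le_mul_card_image A M fun s hs => ?_
  obtain ⟨x, hx, rfl⟩ := mem_image.mp hs
  have hfiber : ↑{y ∈ A | g y = g x} ⊆ g x := fun y hy => by
    obtain ⟨hyA, hy⟩ := mem_filter.mp hy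
    exact hy ▸ hmem y hyA
  rw [← hcard x hx, ← Set.ncard_coe_finset]
  exact Set.ncard_le_ncard hfiber

section prodShift

variable {k : ℕ} (p : Fin k → ℕ)

theorem prodShift_iterate (n : ℕ) (x : (i : Fin k) → ZMod (p i) → Bool) :
    (prodShift p)^[n] x = fun i j => x i (j - n) := by
  induction n with
  | zero => simp
  | succ n ih =>
    rw [iterate_succ_apply', ih]
    funext i j
    simp only [prodShift, Nat.cast_succ, sub_sub, add_comm]

theorem isPeriodicPt_prodShift_iff (n : ℕ) (x : (i : Fin k) → ZMod (p i) → Bool) :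
    IsPeriodicPt (prodShift p) n x ↔ ∀ i, Periodic (x i) n := by
  simp only [IsPeriodicPt, IsFixedPt, prodShift_iterate, funext_iff]
  refine forall_congr' fun i => ⟨fun h j => ?_, fun h j => (h.sub_eq j)⟩
  simpa using (h (j + n)).symm

def blockwiseNonconst [∀ i, NeZero (p i)] (S : Finset (Fin k)) :
    Finset ((i : Fin k) → ZMod (p i) → Bool) :=
  Fintype.piFinset fun i => if i ∈ S then univ \ univ.image (const _) else {const _ false}

variable [∀ i, NeZero (p i)] (S : Finset (Fin k))

theorem card_blockwiseNonconst : #(blockwiseNonconst p S) = ∏ i ∈ S, (2 ^ p i - 2) := by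
  simp only [blockwiseNonconst, Fintype.card_piFinset, apply_ite card,
    card_univ_sdiff_image_const, ZMod.card, Fintype.card_bool, card_singleton, prod_ite_mem,
    univ_inter]

theorem minimalPeriod_prodShift_of_mem_blockwiseNonconst (hp : ∀ i, (p i).Prime)
    (hinj : Injective p) {x : (i : Fin k) → ZMod (p i) → Bool}
    (hx : x ∈ blockwiseNonconst p S) : minimalPeriod (prodShift p) x = ∏ i ∈ S, p i := by
  rw [blockwiseNonconst, Fintype.mem_piFinset] at hx
  have hblock : ∀ n : ℕ, ∀ i, Periodic (x i) n ↔ (i ∈ S → p i ∣ n) := fun n i => by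
    have hxi := hx i
    by_cases hi : i ∈ S
    · rw [if_pos hi] at hxi
      simp only [mem_sdiff, mem_univ, mem_image, true_and, not_exists] at hxi
      have : Fact (p i).Prime := ⟨hp i⟩
      rw [ZMod.periodic_natCast_iff_dvd fun ⟨b, hb⟩ => hxi b hb, imp_iff_right hi]
    · rw [if_neg hi, mem_singleton] at hxi
      exact iff_of_true (hxi ▸ fun _ => rfl) fun h => absurd h hi
  refine Nat.dvd_right_iff_eq.mp fun n => ?_
  rw [← isPeriodicPt_iff_minimalPeriod_dvd, isPeriodicPt_prodShift_iff,
    prod_dvd_iff_forall_dvd_of_prime hp hinj, forall_congr' (hblock n)]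

end prodShift

/-- Let `p_1, …, p_k` be distinct primes and `f` the product of cyclic shifts on the blocks.
For every `S ⊆ {1,…,k}`, the number of orbits of `f` of cardinality `∏_{i∈S} p_i` is at
least `∏_{i∈S} (2^{p_i} - 2)/p_i`. -/
theorem prodShift_many_long_orbits {k : ℕ} (p : Fin k → ℕ) (hp : ∀ i, (p i).Prime)
    (hinj : Function.Injective p) (S : Finset (Fin k)) :
    (∏ i ∈ S, (2 ^ p i - 2) / p i) ≤
      {s : Set ((i : Fin k) → ZMod (p i) → Bool) |
        (∃ x, s = prodOrbit p x) ∧ s.ncard = ∏ i ∈ S, p i}.ncard := by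
  have : ∀ i, NeZero (p i) := fun i => ⟨(hp i).ne_zero⟩
  set A := blockwiseNonconst p S
  set M := ∏ i ∈ S, p i
  have hM : 0 < M := prod_pos fun i _ => (hp i).pos
  have horbit : ∀ x ∈ A, (prodOrbit p x).ncard = M := fun x hx => by
    have hper := minimalPeriod_prodShift_of_mem_blockwiseNonconst p S hp hinj hx
    rw [prodOrbit, ncard_setOf_iterate_eq (minimalPeriod_pos_iff_mem_periodicPts.mp
      (hper ▸ hM)), hper]
  have hcover : #A ≤ M * #(A.image (prodOrbit p)) :=
    card_le_mul_card_image_of_mem A _ M (fun x _ => ⟨0, rfl⟩) horbit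
  have himage : #(A.image (prodOrbit p)) ≤
      {s | (∃ x, s = prodOrbit p x) ∧ s.ncard = M}.ncard := by
    rw [← Set.ncard_coe_finset]
    refine Set.ncard_le_ncard (fun s hs => ?_) (Set.toFinite _)
    obtain ⟨x, hx, rfl⟩ := mem_image.mp hs
    exact ⟨⟨x, rfl⟩, horbit x hx⟩
  have hA : #A = M * ∏ i ∈ S, (2 ^ p i - 2) / p i := by
    rw [card_blockwiseNonconst, ← prod_mul_distrib]
    exact prod_congr rfl fun i _ => (Nat.mul_div_cancel' ((hp i).dvd_pow_self_sub 2)).symm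
  exact Nat.le_of_mul_le_mul_left (hA ▸ hcover.trans (Nat.mul_le_mul_left M himage)) hM
end
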